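/- Formally, let T be the linear operator on the free module with basis {f_{m,n} : m ≥ 0, n ≥ 1} defined by T(f_{m,n}) = f_{m+2,n} + n·f_{m+1,n+1}. For integers 0 ≤ a and b = a + (odd positive), set E_d = 2 f_{d−1,1}/(d−1)! + ∑_{m=2}^{d} f_{d−m,m}/(d−m)! with d = b−a+1. Then (b−a)!·T^a(E_{b−a+1}) = ∑_{k=0}^{a+b} k!·(C(a,k)+C(b,k))·f_{a+b−k,k+1}. -/

import Mathlib

/-- The free `ℚ`-module on symbols `f_{m,n}` indexed by pairs `(m,n) ∈ ℕ × ℕ`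
(the relevant symbols having `m ≥ 0`, `n ≥ 1`); `fgen m n` is the basis element. -/
noncomputable def fgen (m n : ℕ) : (ℕ × ℕ) →₀ ℚ := Finsupp.single (m, n) 1

/-- The operator `T(f_{m,n}) = f_{m+2,n} + n·f_{m+1,n+1}`, extended linearly. -/
noncomputable def TopF (x : (ℕ × ℕ) →₀ ℚ) : (ℕ × ℕ) →₀ ℚ :=
  x.sum fun p c => c • (fgen (p.1 + 2) p.2 + (p.2 : ℚ) • fgen (p.1 + 1) (p.2 + 1))

/-- `E_d = 2 f_{d-1,1}/(d-1)! + ∑_{m=2}^{d} f_{d-m,m}/(d-m)!`. -/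
noncomputable def Efree (d : ℕ) : (ℕ × ℕ) →₀ ℚ :=
  (2 / (d - 1).factorial : ℚ) • fgen (d - 1) 1 +
    ∑ m ∈ Finset.Icc 2 d, (1 / (d - m).factorial : ℚ) • fgen (d - m) m

open Finset Nat

/-!
Write `D(a, N) = ∑_{i+j=N} a^{(j)} f_{i,j+1}`, where `a^{(j)} = j!·C(a,j)` is the falling
factorial. Since the falling factorials obey the Pascal rule
`(a+1)^{(j+1)} = a^{(j+1)} + (j+1)·a^{(j)}`, applying `T` termwise gives `T D(a, N) = D(a+1, N+2)`
as soon as `a ≤ N` (so that no coefficient is lost at the ends of the antidiagonal). With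
`c = b - a`, the vector `c!·E_{c+1}` is `D(0, c) + D(c, c)`; hence `c!·T^a E_{c+1}` is
`D(a, a+b) + D(b, a+b)`, which is the right-hand side.
-/

theorem Nat.succ_descFactorial_succ_eq_add (n k : ℕ) :
    (n + 1).descFactorial (k + 1) = n.descFactorial (k + 1) + (k + 1) * n.descFactorial k := by
  simp only [descFactorial_eq_factorial_mul_choose, choose_succ_succ, factorial_succ]
  ring

noncomputable def TopFLinear : ((ℕ × ℕ) →₀ ℚ) →ₗ[ℚ] (ℕ × ℕ) →₀ ℚ :=
  Finsupp.linearCombination ℚ fun p =>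
    fgen (p.1 + 2) p.2 + (p.2 : ℚ) • fgen (p.1 + 1) (p.2 + 1)

theorem coe_TopFLinear : ⇑TopFLinear = TopF := rfl

theorem TopFLinear_fgen (m n : ℕ) :
    TopFLinear (fgen m n) = fgen (m + 2) n + (n : ℚ) • fgen (m + 1) (n + 1) := by
  rw [TopFLinear, fgen, Finsupp.linearCombination_single, one_smul]

noncomputable def descDiag (a N : ℕ) : (ℕ × ℕ) →₀ ℚ :=
  ∑ p ∈ antidiagonal N, (a.descFactorial p.2 : ℚ) • fgen p.1 (p.2 + 1)

theorem descDiag_zero (N : ℕ) : descDiag 0 N = fgen N 1 := by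
  rw [descDiag, sum_eq_single (N, 0)]
  · simp
  · rintro ⟨i, j⟩ hp hne
    have hj : j ≠ 0 := by rintro rfl; simp_all
    simp [descFactorial_eq_zero_iff_lt.mpr (pos_of_ne_zero hj)]
  · simp

theorem descDiag_eq_sum_range (a n : ℕ) :
    descDiag a n = ∑ k ∈ range (n + 1), (a.descFactorial k : ℚ) • fgen (n - k) (k + 1) := by
  rw [descDiag, ← Nat.sum_antidiagonal_swap, Nat.sum_antidiagonal_eq_sum_range_succ_mk]
  rfl

theorem descDiag_add_descDiag (a b n : ℕ) :
    descDiag a n + descDiag b n = ∑ k ∈ range (n + 1),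
      ((k ! * (a.choose k + b.choose k) : ℕ) : ℚ) • fgen (n - k) (k + 1) := by
  simp only [descDiag_eq_sum_range, ← sum_add_distrib, ← add_smul,
    descFactorial_eq_factorial_mul_choose]
  push_cast
  simp only [mul_add]

theorem TopFLinear_descDiag {a N : ℕ} (h : a ≤ N) :
    TopFLinear (descDiag a N) = descDiag (a + 1) (N + 2) := by
  have vanish : ∀ k, N < k → (a.descFactorial k : ℚ) = 0 := fun k hk => by
    rw [Nat.cast_eq_zero, descFactorial_eq_zero_iff_lt]; omega
  have shift_fst :
      ∑ p ∈ antidiagonal (N + 2), (a.descFactorial p.2 : ℚ) • fgen p.1 (p.2 + 1) =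
      ∑ p ∈ antidiagonal N, (a.descFactorial p.2 : ℚ) • fgen (p.1 + 2) (p.2 + 1) := by
    rw [Nat.sum_antidiagonal_succ, Nat.sum_antidiagonal_succ, vanish _ (by omega),
      vanish _ (by omega), zero_smul, zero_smul, zero_add, zero_add]
  have pascal : descDiag (a + 1) (N + 2) = descDiag a (N + 2) +
      ∑ p ∈ antidiagonal (N + 1),
        ((p.2 + 1) * a.descFactorial p.2 : ℚ) • fgen p.1 (p.2 + 2) := by
    rw [descDiag, descDiag, Nat.sum_antidiagonal_succ' (n := N + 1),
      Nat.sum_antidiagonal_succ' (n := N + 1)]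
    simp only [descFactorial_zero, succ_descFactorial_succ_eq_add]
    push_cast
    simp only [add_smul, sum_add_distrib]
    abel
  have shift_snd :
      ∑ p ∈ antidiagonal (N + 1), ((p.2 + 1) * a.descFactorial p.2 : ℚ) • fgen p.1 (p.2 + 2) =
        ∑ p ∈ antidiagonal N,
          ((p.2 + 1) * a.descFactorial p.2 : ℚ) • fgen (p.1 + 1) (p.2 + 2) := by
    rw [Nat.sum_antidiagonal_succ, vanish _ (by omega), mul_zero, zero_smul, zero_add]
  rw [pascal]
  unfold descDiag
  rw [shift_fst, shift_snd, map_sum, ← sum_add_distrib]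
  refine sum_congr rfl fun p _ => ?_
  rw [map_smul, TopFLinear_fgen, smul_add, smul_smul]
  push_cast
  ring_nf

theorem TopFLinear_pow_descDiag {a N : ℕ} (h : a ≤ N) (j : ℕ) :
    (TopFLinear ^ j) (descDiag a N) = descDiag (a + j) (N + 2 * j) := by
  induction j with
  | zero => rfl
  | succ j ih =>
    rw [_root_.pow_succ', Module.End.mul_apply, ih, TopFLinear_descDiag (by omega)]
    rfl

theorem Efree_succ (c : ℕ) :
    Efree (c + 1) = (1 / c ! : ℚ) • fgen c 1 +
      ∑ p ∈ antidiagonal c, (1 / p.1 ! : ℚ) • fgen p.1 (p.2 + 1) := by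
  rw [← Nat.sum_antidiagonal_swap, Nat.sum_antidiagonal_eq_sum_range_succ_mk, sum_range_succ',
    Efree, ← Finset.Ico_add_one_right_eq_Icc, sum_Ico_eq_sum_range]
  simp only [Prod.swap_prod_mk, add_tsub_cancel_right, Nat.sub_zero]
  have two_smul_eq :
      (2 / c ! : ℚ) • fgen c 1 = (1 / c ! : ℚ) • fgen c 1 + (1 / c ! : ℚ) • fgen c 1 := by
    rw [← add_smul, ← add_div, one_add_one_eq_two]
  rw [show c + 1 + 1 - 2 = c by omega, zero_add, two_smul_eq, add_assoc,
    add_comm _ ((1 / c ! : ℚ) • fgen c 1)]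
  congr 2
  refine sum_congr rfl fun k _ => ?_
  rw [show c + 1 - (2 + k) = c - (k + 1) by omega, add_comm 2 k]

theorem factorial_smul_Efree_succ (c : ℕ) :
    (c ! : ℚ) • Efree (c + 1) = descDiag 0 c + descDiag c c := by
  rw [Efree_succ, smul_add, smul_smul, mul_one_div_cancel (by positivity), one_smul, descDiag_zero,
    smul_sum, descDiag]
  congr 1
  refine sum_congr rfl fun ⟨i, j⟩ hij => ?_
  rw [HasAntidiagonal.mem_antidiagonal] at hij
  rw [smul_smul, ← factorial_mul_descFactorial (show j ≤ c by omega), show c - j = i by omega]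
  push_cast
  field_simp

theorem stmt_9_general (a b : ℕ) (hab : a < b) :
    (((b - a).factorial : ℚ)) • TopF^[a] (Efree (b - a + 1)) =
      ∑ k ∈ Finset.range (a + b + 1),
        ((k.factorial * (a.choose k + b.choose k) : ℕ) : ℚ) • fgen (a + b - k) (k + 1) := by
  rw [← coe_TopFLinear, ← Module.End.coe_pow, ← map_smul, factorial_smul_Efree_succ, map_add,
    TopFLinear_pow_descDiag (Nat.zero_le _), TopFLinear_pow_descDiag le_rfl,
    ← descDiag_add_descDiag]
  congr 2 <;> omega

/-- the combinatorial core of Corollary 1.3: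
`(b-a)!·T^a(E_{b-a+1}) = ∑_{k=0}^{a+b} k!(C(a,k)+C(b,k))·f_{a+b-k,k+1}`
for `0 ≤ a < b` of different parity. -/
theorem stmt_9 (a b : ℕ) (hab : a < b) (hpar : Odd (a + b)) :
    (((b - a).factorial : ℚ)) • TopF^[a] (Efree (b - a + 1)) =
      ∑ k ∈ Finset.range (a + b + 1),
        ((k.factorial * (a.choose k + b.choose k) : ℕ) : ℚ) • fgen (a + b - k) (k + 1) :=
  stmt_9_general a b hab
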